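/- For the order k ≥ 1 Bernstein polynomial p of ReLU on [a,b] with a < 0 < b, the function x ↦ p(x) − ReLU(x) is monotonically non-decreasing on [a,0] and monotonically non-increasing on [0,b], so its maximum over [a,b] is p(0). -/

import Mathlib

/-!
Differentiating a Bernstein polynomial of order `k` gives `k` times the Bernstein polynomial of
order `k - 1` of the forward differences of its coefficients, so the Bernstein operator maps
nondecreasing functions to functions nondecreasing on `[a, b]`; this is the claim on `[a, 0]`,
where `ReLU` vanishes. On `[0, b]`, since the Bernstein operator reproduces linear functions,
`p x - x` is the Bernstein polynomial of `ReLU t - t = ReLU (-t)`, which is nonincreasing.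
-/

open Set

noncomputable def bern (f : ℝ → ℝ) (a b : ℝ) (k : ℕ) (x : ℝ) : ℝ :=
  ∑ i ∈ Finset.range (k + 1),
    f (a + (i / k : ℝ) * (b - a)) * (k.choose i : ℝ) *
      ((x - a) / (b - a)) ^ i * ((b - x) / (b - a)) ^ (k - i)

noncomputable def relu (x : ℝ) : ℝ := max x 0

open Finset Polynomial

namespace bernsteinPolynomial

variable {R : Type*} [CommRing R]

theorem derivative_sum_smul (c : ℕ → R) (n : ℕ) :
    derivative (∑ ν ∈ range (n + 2), c ν • bernsteinPolynomial R (n + 1) ν) =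
      (n + 1 : R[X]) * ∑ ν ∈ range (n + 1), (c (ν + 1) - c ν) • bernsteinPolynomial R n ν := by
  set B := bernsteinPolynomial R n
  have hshift : ∑ ν ∈ range (n + 1), c ν • B ν =
      ∑ ν ∈ range (n + 1), c (ν + 1) • B (ν + 1) + c 0 • B 0 := by
    have htop : B (n + 1) = 0 := eq_zero_of_lt R n.lt_succ_self
    rw [← sum_range_succ' (fun ν => c ν • B ν), sum_range_succ _ (n + 1), htop, smul_zero, add_zero]
  calc derivative (∑ ν ∈ range (n + 2), c ν • bernsteinPolynomial R (n + 1) ν)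
      = (n + 1 : R[X]) * (∑ ν ∈ range (n + 1), c (ν + 1) • (B ν - B (ν + 1)) - c 0 • B 0) := by
        rw [sum_range_succ', derivative_add, derivative_sum]
        simp only [derivative_smul, derivative_succ_aux, derivative_zero]
        rw [mul_sub, mul_sum]
        congr 1
        · exact sum_congr rfl fun _ _ => (mul_smul_comm _ _ _).symm
        · simp only [smul_eq_C_mul]; push_cast; ring
    _ = (n + 1 : R[X]) * ∑ ν ∈ range (n + 1), (c (ν + 1) - c ν) • B ν := by
        simp only [smul_sub, sub_smul, sum_sub_distrib, hshift]
        ring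

theorem eval_nonneg [PartialOrder R] [IsOrderedRing R] (n ν : ℕ) {s : R}
    (hs₀ : 0 ≤ s) (hs₁ : s ≤ 1) : 0 ≤ (bernsteinPolynomial R n ν).eval s := by
  have : 0 ≤ 1 - s := sub_nonneg.mpr hs₁
  simp only [bernsteinPolynomial, eval_mul, eval_pow, eval_sub, eval_one, eval_X, eval_natCast]
  positivity

theorem monotoneOn_eval_sum_smul {c : ℕ → ℝ} (hc : Monotone c) (n : ℕ) :
    MonotoneOn (fun s => (∑ ν ∈ range (n + 1), c ν • bernsteinPolynomial ℝ n ν).eval s)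
      (Icc (0 : ℝ) 1) := by
  rcases n with _ | n
  · simp [bernsteinPolynomial, monotoneOn_const]
  refine monotoneOn_of_deriv_nonneg (convex_Icc 0 1) (Polynomial.continuousOn _)
    (Polynomial.differentiableOn _) fun s hs => ?_
  rw [interior_Icc] at hs
  rw [Polynomial.deriv, derivative_sum_smul, eval_mul, eval_finsetSum]
  refine mul_nonneg (by simp; positivity) (sum_nonneg fun ν _ => ?_)
  rw [eval_smul, smul_eq_mul]
  exact mul_nonneg (sub_nonneg.mpr (hc ν.le_succ)) (eval_nonneg n ν hs.1.le hs.2.le)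

end bernsteinPolynomial

section bern

variable {f g : ℝ → ℝ} {a b : ℝ} {k : ℕ}

theorem bern_eq_eval (hab : a ≠ b) (x : ℝ) :
    bern f a b k x = (∑ i ∈ range (k + 1), f (a + (i / k : ℝ) * (b - a)) •
      bernsteinPolynomial ℝ k i).eval ((x - a) / (b - a)) := by
  have hsub : b - a ≠ 0 := sub_ne_zero.mpr hab.symm
  have hcompl : 1 - (x - a) / (b - a) = (b - x) / (b - a) := by field_simp; ring
  simp only [bern, eval_finsetSum, eval_smul, smul_eq_mul, bernsteinPolynomial, eval_mul, eval_pow,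
    eval_sub, eval_one, eval_X, eval_natCast, hcompl, mul_assoc]

theorem bern_sub (x : ℝ) :
    bern (fun t => f t - g t) a b k x = bern f a b k x - bern g a b k x := by
  simp only [bern, ← sum_sub_distrib, sub_mul]

theorem bern_neg (x : ℝ) : bern (fun t => -f t) a b k x = -bern f a b k x := by
  simp only [bern, ← sum_neg_distrib, neg_mul]

theorem bern_id (hk : k ≠ 0) (hab : a ≠ b) (x : ℝ) : bern (fun t => t) a b k x = x := by
  set s := (x - a) / (b - a)
  have hsum : ∑ i ∈ range (k + 1), (bernsteinPolynomial ℝ k i).eval s = 1 := by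
    simpa [eval_finsetSum] using congrArg (eval s) (bernsteinPolynomial.sum ℝ k)
  have hsum_smul : ∑ i ∈ range (k + 1), (i : ℝ) * (bernsteinPolynomial ℝ k i).eval s = k * s := by
    simpa [eval_finsetSum] using congrArg (eval s) (bernsteinPolynomial.sum_smul ℝ k)
  rw [bern_eq_eval hab]
  calc (∑ i ∈ range (k + 1), (a + (i / k : ℝ) * (b - a)) • bernsteinPolynomial ℝ k i).eval s
      = a * ∑ i ∈ range (k + 1), (bernsteinPolynomial ℝ k i).eval s +
          (b - a) / k * ∑ i ∈ range (k + 1), (i : ℝ) * (bernsteinPolynomial ℝ k i).eval s := by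
        simp only [eval_finsetSum, eval_smul, smul_eq_mul, mul_sum, ← sum_add_distrib]
        exact sum_congr rfl fun _ _ => by ring
    _ = x := by
        have hsub : b - a ≠ 0 := sub_ne_zero.mpr hab.symm
        rw [hsum, hsum_smul]
        simp only [s]
        field_simp
        ring

theorem bern_monotoneOn (hab : a < b) (hf : Monotone f) : MonotoneOn (bern f a b k) (Icc a b) := by
  have hba : 0 < b - a := sub_pos.mpr hab
  have hc : Monotone fun i : ℕ => f (a + (i / k : ℝ) * (b - a)) :=
    hf.comp fun _ _ hij => by gcongr
  have hmaps : MapsTo (fun x => (x - a) / (b - a)) (Icc a b) (Icc 0 1) := fun x hx =>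
    ⟨div_nonneg (by linarith [hx.1]) hba.le, (div_le_one hba).mpr (by linarith [hx.2])⟩
  have hnorm : Monotone fun x => (x - a) / (b - a) := fun _ _ hxy =>
    div_le_div_of_nonneg_right (sub_le_sub_right hxy a) hba.le
  refine ((bernsteinPolynomial.monotoneOn_eval_sum_smul hc k).comp (hnorm.monotoneOn _) hmaps).congr
    fun x _ => (bern_eq_eval hab.ne x).symm

theorem bern_antitoneOn (hab : a < b) (hf : Antitone f) : AntitoneOn (bern f a b k) (Icc a b) :=
  fun x hx y hy hxy => by
    simpa only [bern_neg, neg_le_neg_iff] using bern_monotoneOn hab hf.neg hx hy hxy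

end bern

theorem relu_monotone : Monotone relu := fun _ _ h => max_le_max h le_rfl

theorem relu_sub_self (x : ℝ) : relu x - x = relu (-x) := by
  simp only [relu]; rcases le_total x 0 with h | h
  · rw [max_eq_right h, max_eq_left (neg_nonneg.mpr h)]; ring
  · rw [max_eq_left h, max_eq_right (neg_nonpos.mpr h)]; ring

theorem bernstein_relu_diff_monotone (a b : ℝ) (k : ℕ)
    (ha : a < 0) (hb : 0 < b) (hk : 1 ≤ k) :
    MonotoneOn (fun x => bern relu a b k x - relu x) (Icc a 0) ∧
    AntitoneOn (fun x => bern relu a b k x - relu x) (Icc 0 b) ∧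
    ∀ x ∈ Icc a b, bern relu a b k x - relu x ≤ bern relu a b k 0 := by
  have hab : a < b := ha.trans hb
  have hneg : MonotoneOn (fun x => bern relu a b k x - relu x) (Icc a 0) :=
    ((bern_monotoneOn (k := k) hab relu_monotone).mono (Icc_subset_Icc_right hb.le)).congr
      fun x hx => by simp [relu, hx.2]
  have hrelu_neg : Antitone fun t => relu (-t) := relu_monotone.comp_antitone fun _ _ => neg_le_neg
  have hpos : AntitoneOn (fun x => bern relu a b k x - relu x) (Icc 0 b) := by
    refine ((bern_antitoneOn (k := k) hab hrelu_neg).mono (Icc_subset_Icc_left ha.le)).congr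
      fun x hx => ?_
    simp only [← relu_sub_self, bern_sub, bern_id (by omega : k ≠ 0) hab.ne]
    rw [relu, max_eq_left hx.1]
  refine ⟨hneg, hpos, fun x hx => ?_⟩
  simpa [relu] using isMaxOn_Icc_of_mono_anti hneg hpos hx
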